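/- For a complex number t ≠ ±1, define I₁(t) = ∫_∞^t 4/(u−1)² du = −4/(t−1), I₂(t) = ∫_∞^t −12u²/(u−1)⁴ du = 4(3t² − 3t + 1)/(t−1)³ (the antiderivative of −12u²/(u−1)⁴ vanishing at u = ∞), I₃(t) = ∫_∞^t 4/(u+1)² du = −4/(t+1), and I₄(t) = ∫_∞^t −12u²/(u+1)⁴ du (the antiderivative of −12u²/(u+1)⁴ vanishing at ∞). Then for all t₁, t₂, t₃ ∉ {1, −1}, the point (Z₁, Z₂, Z₃, Z₄) with Zⱼ = Iⱼ(t₁) + Iⱼ(t₂) + Iⱼ(t₃) satisfies the degree-6 bicuspidal theta polynomial equation θ(Z₁,Z₂,Z₃,Z₄) = 0, where θ = (Z₁³ − 24Z₁² + 192Z₁ + 16Z₂ − 336)(Z₃³ + 24Z₃² + 192Z₃ + 16Z₄ + 336) + 36(Z₁Z₃ + 10Z₁ − 6Z₃ − 56)(Z₁Z₃ + 6Z₁ − 10Z₃ − 56). -/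
import Mathlib


/-- The degree-6 bicuspidal theta polynomial. -/
noncomputable def thetaBC (Z₁ Z₂ Z₃ Z₄ : ℂ) : ℂ :=
  (Z₁ ^ 3 - 24 * Z₁ ^ 2 + 192 * Z₁ + 16 * Z₂ - 336)
      * (Z₃ ^ 3 + 24 * Z₃ ^ 2 + 192 * Z₃ + 16 * Z₄ + 336)
    + 36 * (Z₁ * Z₃ + 10 * Z₁ - 6 * Z₃ - 56) * (Z₁ * Z₃ + 6 * Z₁ - 10 * Z₃ - 56)

/-- Abelian integral of ω₁ = 4/(u−1)² du from ∞ to t. -/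
noncomputable def I₁ (t : ℂ) : ℂ := -4 / (t - 1)

/-- Abelian integral of ω₂ = −12u²/(u−1)⁴ du from ∞ to t (antiderivative vanishing at ∞);
equals 4(3t² − 3t + 1)/(t − 1)³. -/
noncomputable def I₂ (t : ℂ) : ℂ := 12 / (t - 1) + 12 / (t - 1) ^ 2 + 4 / (t - 1) ^ 3

/-- Abelian integral of ω₃ = 4/(u+1)² du from ∞ to t. -/
noncomputable def I₃ (t : ℂ) : ℂ := -4 / (t + 1)

/-- Abelian integral of ω₄ = −12u²/(u+1)⁴ du from ∞ to t (antiderivative vanishing at ∞). -/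
noncomputable def I₄ (t : ℂ) : ℂ := 12 / (t + 1) - 12 / (t + 1) ^ 2 + 4 / (t + 1) ^ 3

set_option maxHeartbeats 1600000 in
/-- Polynomial core of the theta-divisor identity, in the inverse variables
aᵢ = 1/(tᵢ − 1), bᵢ = 1/(tᵢ + 1), which satisfy the relation aᵢ − bᵢ = 2aᵢbᵢ. -/
lemma polyAux (a₁ a₂ a₃ b₁ b₂ b₃ : ℂ)
    (r1 : a₁ - b₁ = 2 * (a₁ * b₁)) (r2 : a₂ - b₂ = 2 * (a₂ * b₂))
    (r3 : a₃ - b₃ = 2 * (a₃ * b₃)) :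
    thetaBC (-4 * a₁ + -4 * a₂ + -4 * a₃)
      ((12 * a₁ + 12 * a₁ ^ 2 + 4 * a₁ ^ 3) + (12 * a₂ + 12 * a₂ ^ 2 + 4 * a₂ ^ 3)
        + (12 * a₃ + 12 * a₃ ^ 2 + 4 * a₃ ^ 3))
      (-4 * b₁ + -4 * b₂ + -4 * b₃)
      ((12 * b₁ - 12 * b₁ ^ 2 + 4 * b₁ ^ 3) + (12 * b₂ - 12 * b₂ ^ 2 + 4 * b₂ ^ 3)
        + (12 * b₃ - 12 * b₃ ^ 2 + 4 * b₃ ^ 3)) = 0 := by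
  simp only [thetaBC]
  linear_combination ((-18432)*a₁*a₂*b₁*b₂ + (-18432)*a₁*a₂*b₁*b₃ + 18432*a₁*a₂*b₁ + (-18432)*a₁*a₂*b₂^2 + (-36864)*a₁*a₂*b₂*b₃ + 64512*a₁*a₂*b₂ + (-18432)*a₁*a₂*b₃^2 + 64512*a₁*a₂*b₃ + (-46080)*a₁*a₂ + (-18432)*a₁*a₃*b₁*b₂ + (-18432)*a₁*a₃*b₁*b₃ + 18432*a₁*a₃*b₁ + (-18432)*a₁*a₃*b₂^2 + (-36864)*a₁*a₃*b₂*b₃ + 64512*a₁*a₃*b₂ + (-18432)*a₁*a₃*b₃^2 + 64512*a₁*a₃*b₃ + (-46080)*a₁*a₃ + (-18432)*a₁*b₁*b₂ + (-18432)*a₁*b₁*b₃ + 13824*a₁*b₁ + (-18432)*a₁*b₂^2 + (-36864)*a₁*b₂*b₃ + 55296*a₁*b₂ + (-18432)*a₁*b₃^2 + 55296*a₁*b₃ + (-29952)*a₁ + (-18432)*a₂^2*b₁*b₂ + (-18432)*a₂^2*b₁*b₃ + 18432*a₂^2*b₁ + (-18432)*a₂^2*b₂^2 + (-36864)*a₂^2*b₂*b₃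 + 64512*a₂^2*b₂ + (-18432)*a₂^2*b₃^2 + 64512*a₂^2*b₃ + (-46080)*a₂^2 + (-36864)*a₂*a₃*b₁*b₂ + (-36864)*a₂*a₃*b₁*b₃ + 36864*a₂*a₃*b₁ + (-36864)*a₂*a₃*b₂^2 + (-73728)*a₂*a₃*b₂*b₃ + 129024*a₂*a₃*b₂ + (-36864)*a₂*a₃*b₃^2 + 129024*a₂*a₃*b₃ + (-92160)*a₂*a₃ + (-64512)*a₂*b₁*b₂ + (-64512)*a₂*b₁*b₃ + 55296*a₂*b₁ + (-64512)*a₂*b₂^2 + (-129024)*a₂*b₂*b₃ + 211968*a₂*b₂ + (-64512)*a₂*b₃^2 + 211968*a₂*b₃ + (-133632)*a₂ + (-18432)*a₃^2*b₁*b₂ + (-18432)*a₃^2*b₁*b₃ + 18432*a₃^2*b₁ + (-18432)*a₃^2*b₂^2 + (-36864)*a₃^2*b₂*b₃ + 64512*a₃^2*b₂ + (-18432)*a₃^2*b₃^2 + 64512*a₃^2*b₃ + (-46080)*a₃^2 + (-64512)*a₃*b₁*b₂ + (-64512)*a₃*b₁*b₃ + 55296*a₃*b₁ + (-64512)*a₃*b₂^2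 + (-129024)*a₃*b₂*b₃ + 211968*a₃*b₂ + (-64512)*a₃*b₃^2 + 211968*a₃*b₃ + (-133632)*a₃ + (-46080)*b₁*b₂ + (-46080)*b₁*b₃ + 29952*b₁ + (-46080)*b₂^2 + (-92160)*b₂*b₃ + 133632*b₂ + (-46080)*b₃^2 + 133632*b₃ + (-64512)) * r1 + ((-18432)*a₁^2*b₂*b₃ + 9216*a₁^2*b₂ + (-18432)*a₁^2*b₃^2 + 46080*a₁^2*b₃ + (-18432)*a₁^2 + (-18432)*a₁*a₂*b₂*b₃ + 9216*a₁*a₂*b₂ + (-18432)*a₁*a₂*b₃^2 + 46080*a₁*a₂*b₃ + (-18432)*a₁*a₂ + (-36864)*a₁*a₃*b₂*b₃ + 18432*a₁*a₃*b₂ + (-36864)*a₁*a₃*b₃^2 + 92160*a₁*a₃*b₃ + (-36864)*a₁*a₃ + (-64512)*a₁*b₂*b₃ + 27648*a₁*b₂ + (-64512)*a₁*b₃^2 + 156672*a₁*b₃ + (-55296)*a₁ + (-18432)*a₂*a₃*b₁^2 + (-18432)*a₂*a₃*b₁*b₂ + (-36864)*a₂*a₃*b₁*b₃ + 64512*a₂*a₃*b₁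 + (-18432)*a₂*a₃*b₂*b₃ + 18432*a₂*a₃*b₂ + (-18432)*a₂*a₃*b₃^2 + 64512*a₂*a₃*b₃ + (-46080)*a₂*a₃ + (-9216)*a₂*b₁^2 + (-9216)*a₂*b₁*b₂ + (-18432)*a₂*b₁*b₃ + 27648*a₂*b₁ + (-18432)*a₂*b₂*b₃ + 13824*a₂*b₂ + (-18432)*a₂*b₃^2 + 55296*a₂*b₃ + (-29952)*a₂ + (-18432)*a₃^2*b₁^2 + (-18432)*a₃^2*b₁*b₂ + (-36864)*a₃^2*b₁*b₃ + 64512*a₃^2*b₁ + (-18432)*a₃^2*b₂*b₃ + 18432*a₃^2*b₂ + (-18432)*a₃^2*b₃^2 + 64512*a₃^2*b₃ + (-46080)*a₃^2 + (-46080)*a₃*b₁^2 + (-46080)*a₃*b₁*b₂ + (-92160)*a₃*b₁*b₃ + 156672*a₃*b₁ + (-64512)*a₃*b₂*b₃ + 55296*a₃*b₂ + (-64512)*a₃*b₃^2 + 211968*a₃*b₃ + (-133632)*a₃ + (-18432)*b₁^2 + (-18432)*b₁*b₂ + (-36864)*b₁*b₃ + 55296*b₁ + (-46080)*b₂*b₃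 + 29952*b₂ + (-46080)*b₃^2 + 133632*b₃ + (-64512)) * r2 + ((-18432)*a₁^2*b₂^2 + (-18432)*a₁^2*b₂*b₃ + 46080*a₁^2*b₂ + 9216*a₁^2*b₃ + (-18432)*a₁^2 + (-18432)*a₁*a₃*b₂^2 + (-18432)*a₁*a₃*b₂*b₃ + 46080*a₁*a₃*b₂ + 9216*a₁*a₃*b₃ + (-18432)*a₁*a₃ + (-46080)*a₁*b₂^2 + (-46080)*a₁*b₂*b₃ + 119808*a₁*b₂ + 27648*a₁*b₃ + (-55296)*a₁ + (-18432)*a₂^2*b₁^2 + (-18432)*a₂^2*b₁*b₃ + 46080*a₂^2*b₁ + 9216*a₂^2*b₃ + (-18432)*a₂^2 + (-18432)*a₂*a₃*b₁^2 + (-18432)*a₂*a₃*b₁*b₃ + 46080*a₂*a₃*b₁ + 9216*a₂*a₃*b₃ + (-18432)*a₂*a₃ + (-46080)*a₂*b₁^2 + (-46080)*a₂*b₁*b₃ + 119808*a₂*b₁ + 27648*a₂*b₃ + (-55296)*a₂ + (-9216)*a₃*b₁^2 + (-9216)*a₃*b₁*b₃ + 27648*a₃*b₁ + (-9216)*a₃*b₂^2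 + (-9216)*a₃*b₂*b₃ + 27648*a₃*b₂ + 13824*a₃*b₃ + (-29952)*a₃ + (-18432)*b₁^2 + (-18432)*b₁*b₃ + 55296*b₁ + (-18432)*b₂^2 + (-18432)*b₂*b₃ + 55296*b₂ + 29952*b₃ + (-64512)) * r3

/-- The degree-3 abelian-sum parametrization lands in the theta divisor W₃ of the
bicuspidal curve. -/
theorem abelian_sum_in_theta_divisor (t₁ t₂ t₃ : ℂ)
    (h₁ : t₁ ≠ 1 ∧ t₁ ≠ -1) (h₂ : t₂ ≠ 1 ∧ t₂ ≠ -1) (h₃ : t₃ ≠ 1 ∧ t₃ ≠ -1) :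
    thetaBC (I₁ t₁ + I₁ t₂ + I₁ t₃) (I₂ t₁ + I₂ t₂ + I₂ t₃)
      (I₃ t₁ + I₃ t₂ + I₃ t₃) (I₄ t₁ + I₄ t₂ + I₄ t₃) = 0 := by
  obtain ⟨h1a, h1b⟩ := h₁
  obtain ⟨h2a, h2b⟩ := h₂
  obtain ⟨h3a, h3b⟩ := h₃
  have d1a : t₁ - 1 ≠ 0 := sub_ne_zero.mpr h1a
  have d2a : t₂ - 1 ≠ 0 := sub_ne_zero.mpr h2a
  have d3a : t₃ - 1 ≠ 0 := sub_ne_zero.mpr h3a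
  have d1b : t₁ + 1 ≠ 0 := fun h => h1b (by linear_combination h)
  have d2b : t₂ + 1 ≠ 0 := fun h => h2b (by linear_combination h)
  have d3b : t₃ + 1 ≠ 0 := fun h => h3b (by linear_combination h)
  have r1 : (t₁ - 1)⁻¹ - (t₁ + 1)⁻¹ = 2 * ((t₁ - 1)⁻¹ * (t₁ + 1)⁻¹) := by
    field_simp; ring
  have r2 : (t₂ - 1)⁻¹ - (t₂ + 1)⁻¹ = 2 * ((t₂ - 1)⁻¹ * (t₂ + 1)⁻¹) := by
    field_simp; ring
  have r3 : (t₃ - 1)⁻¹ - (t₃ + 1)⁻¹ = 2 * ((t₃ - 1)⁻¹ * (t₃ + 1)⁻¹) := by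
    field_simp; ring
  have e1 : I₁ t₁ + I₁ t₂ + I₁ t₃
      = -4 * (t₁ - 1)⁻¹ + -4 * (t₂ - 1)⁻¹ + -4 * (t₃ - 1)⁻¹ := by
    simp only [I₁]; ring
  have e2 : I₂ t₁ + I₂ t₂ + I₂ t₃
      = (12 * (t₁ - 1)⁻¹ + 12 * ((t₁ - 1)⁻¹) ^ 2 + 4 * ((t₁ - 1)⁻¹) ^ 3)
        + (12 * (t₂ - 1)⁻¹ + 12 * ((t₂ - 1)⁻¹) ^ 2 + 4 * ((t₂ - 1)⁻¹) ^ 3)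
        + (12 * (t₃ - 1)⁻¹ + 12 * ((t₃ - 1)⁻¹) ^ 2 + 4 * ((t₃ - 1)⁻¹) ^ 3) := by
    simp only [I₂, div_eq_mul_inv, ← inv_pow]
  have e3 : I₃ t₁ + I₃ t₂ + I₃ t₃
      = -4 * (t₁ + 1)⁻¹ + -4 * (t₂ + 1)⁻¹ + -4 * (t₃ + 1)⁻¹ := by
    simp only [I₃]; ring
  have e4 : I₄ t₁ + I₄ t₂ + I₄ t₃
      = (12 * (t₁ + 1)⁻¹ - 12 * ((t₁ + 1)⁻¹) ^ 2 + 4 * ((t₁ + 1)⁻¹) ^ 3)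
        + (12 * (t₂ + 1)⁻¹ - 12 * ((t₂ + 1)⁻¹) ^ 2 + 4 * ((t₂ + 1)⁻¹) ^ 3)
        + (12 * (t₃ + 1)⁻¹ - 12 * ((t₃ + 1)⁻¹) ^ 2 + 4 * ((t₃ + 1)⁻¹) ^ 3) := by
    simp only [I₄, div_eq_mul_inv, ← inv_pow]
  rw [e1, e2, e3, e4]
  exact polyAux _ _ _ _ _ _ r1 r2 r3
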